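/- arXiv:2507.17021 — 7 statements merged into one kernel-verified Lean document; each statement's English description precedes it below -/
import Mathlib

section
/- The discriminant of f(x) = x^6 + A x^3 + B (as a degree-6 polynomial over ℚ) equals 3^6 · B^2 · (A^2 - 4B)^3. -/
open Polynomial Finset

/-- The discriminant of the monic sextic `x^6 + A x^3 + B`, expressed via its
complex roots, equals `3^6 · B^2 · (A^2 - 4B)^3`. -/
theorem stmt1 (A B : ℤ) (hB : B ≠ 0) (r : Fin 6 → ℂ)
    (hroots : (X ^ 6 + C (A : ℂ) * X ^ 3 + C (B : ℂ) : ℂ[X]) =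
      ∏ i : Fin 6, (X - C (r i))) :
    ∏ i : Fin 6, ∏ j ∈ Finset.univ.filter (fun j => i < j), (r i - r j) ^ 2 =
      (3 : ℂ) ^ 6 * (B : ℂ) ^ 2 * ((A : ℂ) ^ 2 - 4 * (B : ℂ)) ^ 3 := by
  have heval : ∀ x : ℂ, x ^ 6 + A * x ^ 3 + B = ∏ i : Fin 6, (x - r i) := by
    intro x
    have := congrArg (eval x) hroots
    simpa [eval_prod] using this
  have hprod : ∏ i : Fin 6, r i = (B : ℂ) := by
    have := heval 0
    simp only [Fin.prod_univ_six] at this ⊢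
    linear_combination -this
  have hderiv : ∀ i : Fin 6, 6 * (r i) ^ 5 + 3 * A * (r i) ^ 2
      = ∏ j ∈ univ.erase i, (r i - r j) := by
    intro i
    have hfact : (X ^ 6 + C (A : ℂ) * X ^ 3 + C (B : ℂ) : ℂ[X]) =
        (X - C (r i)) * ∏ j ∈ univ.erase i, (X - C (r j)) := by
      rw [hroots, ← Finset.mul_prod_erase univ _ (mem_univ i)]
    have := congrArg (fun p => eval (r i) (derivative p)) hfact
    simp [eval_prod, derivative_mul] at this
    linear_combination this
  -- sign lemma
  have hE : ∀ i : Fin 6, univ.erase i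
      = (univ.filter (fun j => j < i)) ∪ (univ.filter (fun j => i < j)) := by decide
  have hdisj : ∀ i : Fin 6,
      Disjoint (univ.filter (fun j => j < i)) (univ.filter (fun j => i < j)) := by decide
  have hsplit : ∏ i : Fin 6, ∏ j ∈ univ.erase i, (r i - r j)
      = (∏ i : Fin 6, ∏ j ∈ univ.filter (fun j => j < i), (r i - r j))
        * ∏ i : Fin 6, ∏ j ∈ univ.filter (fun j => i < j), (r i - r j) := by
    rw [← Finset.prod_mul_distrib]
    refine Finset.prod_congr rfl fun i _ => ?_
    rw [hE i, Finset.prod_union (hdisj i)]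
  have hswap : (∏ i : Fin 6, ∏ j ∈ univ.filter (fun j => j < i), (r i - r j))
      = ∏ i : Fin 6, ∏ j ∈ univ.filter (fun j => i < j), (r j - r i) := by
    exact Finset.prod_comm' (by intro x y; simp)
  have hneg : ∀ i : Fin 6, (∏ j ∈ univ.filter (fun j => i < j), (r j - r i))
      = (-1) ^ (univ.filter (fun j => i < j)).card
        * ∏ j ∈ univ.filter (fun j => i < j), (r i - r j) := by
    intro i
    rw [← Finset.prod_const, ← Finset.prod_mul_distrib]
    exact Finset.prod_congr rfl fun j _ => by ring
  have hsign : ∏ i : Fin 6, ((-1 : ℂ)) ^ (univ.filter (fun j => i < j)).card = -1 := by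
    rw [Fin.prod_univ_six]
    norm_num [show ((univ.filter (fun j => (0:Fin 6) < j)).card) = 5 from by decide,
      show ((univ.filter (fun j => (1:Fin 6) < j)).card) = 4 from by decide,
      show ((univ.filter (fun j => (2:Fin 6) < j)).card) = 3 from by decide,
      show ((univ.filter (fun j => (3:Fin 6) < j)).card) = 2 from by decide,
      show ((univ.filter (fun j => (4:Fin 6) < j)).card) = 1 from by decide,
      show ((univ.filter (fun j => (5:Fin 6) < j)).card) = 0 from by decide]
  have E1 : ∏ i : Fin 6, ∏ j ∈ univ.erase i, (r i - r j)
      = - ∏ i : Fin 6, ∏ j ∈ univ.filter (fun j => i < j), (r i - r j) ^ 2 := by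
    rw [hsplit, hswap]
    rw [Finset.prod_congr rfl fun i _ => hneg i, Finset.prod_mul_distrib, hsign]
    rw [Finset.prod_congr rfl fun i (_ : i ∈ univ) =>
      Finset.prod_pow (univ.filter (fun j => i < j)) 2 (fun j => r i - r j),
      Finset.prod_pow]
    ring
  -- cube roots of unity and of -A/2
  obtain ⟨c, hc⟩ : ∃ c : ℂ, c ^ 3 = -A / 2 :=
    IsAlgClosed.exists_pow_nat_eq (-(A:ℂ) / 2) (n := 3) (by norm_num)
  set ω : ℂ := (-1 + Real.sqrt 3 * Complex.I) / 2 with hωdef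
  have hs : ((Real.sqrt 3 : ℝ) : ℂ) ^ 2 = 3 := by
    rw [← Complex.ofReal_pow]
    norm_num [Real.sq_sqrt]
  have hω : ω ^ 2 + ω + 1 = 0 := by
    rw [hωdef]
    have hI := Complex.I_sq
    linear_combination (((Real.sqrt 3 : ℝ) : ℂ) ^ 2 / 4) * hI - (1 / 4 : ℂ) * hs
  have hω3 : ω ^ 3 = 1 := by linear_combination (ω - 1) * hω
  have hfactor : ∀ x : ℂ, 2 * x ^ 3 + A
      = 2 * (x - c) * (x - ω * c) * (x - ω ^ 2 * c) := by
    intro x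
    linear_combination (2 * c * x ^ 2 - 2 * c ^ 2 * ω * x + 2 * c ^ 3 * (ω - 1)) * hω + 2 * hc
  have hval : ∀ d : ℂ, d ^ 3 = -A / 2 → ∏ i : Fin 6, (r i - d) = (B : ℂ) - A ^ 2 / 4 := by
    intro d hd
    have h := heval d
    have h2 : ∏ i : Fin 6, (r i - d) = ∏ i : Fin 6, (d - r i) := by
      rw [Fin.prod_univ_six, Fin.prod_univ_six]; ring
    rw [h2, ← h]
    linear_combination (d ^ 3 + A / 2) * hd
  have E4 : ∏ i : Fin 6, (2 * (r i) ^ 3 + A) = 2 ^ 6 * ((B : ℂ) - A ^ 2 / 4) ^ 3 := by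
    calc ∏ i : Fin 6, (2 * (r i) ^ 3 + A)
        = ∏ i : Fin 6, (2 * (r i - c) * (r i - ω * c) * (r i - ω ^ 2 * c)) :=
          Finset.prod_congr rfl fun i _ => hfactor (r i)
      _ = (∏ _i : Fin 6, (2:ℂ)) * (∏ i : Fin 6, (r i - c)) * (∏ i : Fin 6, (r i - ω * c))
            * ∏ i : Fin 6, (r i - ω ^ 2 * c) := by
          rw [← Finset.prod_mul_distrib, ← Finset.prod_mul_distrib, ← Finset.prod_mul_distrib]
      _ = 2 ^ 6 * ((B : ℂ) - A ^ 2 / 4) ^ 3 := by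
          rw [Finset.prod_const, hval c hc,
            hval (ω * c) (by linear_combination c ^ 3 * hω3 + hc),
            hval (ω ^ 2 * c) (by linear_combination c ^ 3 * ω ^ 3 * hω3 + c^3 * hω3 + hc)]
          simp only [Finset.card_univ, Fintype.card_fin]
          ring
  have E3 : ∏ i : Fin 6, (6 * (r i) ^ 5 + 3 * (A:ℂ) * (r i) ^ 2)
      = 3 ^ 6 * (B : ℂ) ^ 2 * ∏ i : Fin 6, (2 * (r i) ^ 3 + A) := by
    calc ∏ i : Fin 6, (6 * (r i) ^ 5 + 3 * (A:ℂ) * (r i) ^ 2)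
        = ∏ i : Fin 6, (3 * (r i * r i) * (2 * (r i) ^ 3 + A)) :=
          Finset.prod_congr rfl fun i _ => by ring
      _ = (∏ _i : Fin 6, (3:ℂ)) * (∏ i : Fin 6, (r i * r i))
            * ∏ i : Fin 6, (2 * (r i) ^ 3 + A) := by
          rw [← Finset.prod_mul_distrib, ← Finset.prod_mul_distrib]
      _ = 3 ^ 6 * (B : ℂ) ^ 2 * ∏ i : Fin 6, (2 * (r i) ^ 3 + A) := by
          rw [Finset.prod_const, Finset.prod_mul_distrib, hprod]
          simp only [Finset.card_univ, Fintype.card_fin]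
          ring
  have E2 : ∏ i : Fin 6, ∏ j ∈ univ.erase i, (r i - r j)
      = ∏ i : Fin 6, (6 * (r i) ^ 5 + 3 * (A:ℂ) * (r i) ^ 2) :=
    (Finset.prod_congr rfl fun i _ => (hderiv i).symm)
  have final := E1.symm.trans (E2.trans (E3.trans (by rw [E4])))
  linear_combination -final
end

section
/- If g(x) = x^2 + Ax + B ∈ ℤ[x] is irreducible over ℚ, then f(x) = g(x^3) = x^6 + A x^3 + B is reducible over ℚ if and only if there exist integers m, n with B = n^3 and A = m^3 - 3mn. -/
/-!
If `f = g(X³)` has a proper factor, it has a monic irreducible factor `p` of degree at most 3.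
A root `β` of `p` makes `β³` a root of the irreducible quadratic `g`, so `2 ∣ deg p`, i.e.
`p = X² + aX + b`. Dividing `f` by `p`, the remainder vanishes only if `b = a²` (then `a³`
would be a rational root of `g`) or `A = a³ - 3ab` and `B = b³`; and conversely `X² + mX + n`
divides `X⁶ + (m³ - 3mn)X³ + n³`. Finally `b³ = B` and `a³ = 3ba + A` make `b`, then `a`,
integral over `ℤ`, hence integers.
-/

open Polynomial

namespace Polynomial

variable {K : Type*} [Field K]

theorem exists_monic_irreducible_factor_natDegree_le_half {f : K[X]} (hf0 : f ≠ 0)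
    (hfu : ¬IsUnit f) (hf : ¬Irreducible f) :
    ∃ p : K[X], p.Monic ∧ Irreducible p ∧ p ∣ f ∧ p.natDegree ≤ f.natDegree / 2 := by
  rw [irreducible_iff_lt_natDegree_lt hf0 hfu] at hf
  push Not at hf
  obtain ⟨q, hq_monic, hq_deg, hqf⟩ := hf
  rw [Finset.mem_Ioc] at hq_deg
  have hq_unit : ¬IsUnit q := fun h => by
    rw [hq_monic.isUnit_iff] at h
    simp [h] at hq_deg
  obtain ⟨p, hp_monic, hp_irr, hpq⟩ := q.exists_monic_irreducible_factor hq_unit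
  exact ⟨p, hp_monic, hp_irr, hpq.trans hqf,
    (natDegree_le_of_dvd hpq hq_monic.ne_zero).trans hq_deg.2⟩

theorem natDegree_dvd_natDegree_of_dvd_comp {p q r : K[X]} (hp : Irreducible p)
    (hq : Irreducible q) (h : p ∣ q.comp r) : q.natDegree ∣ p.natDegree := by
  have := Fact.mk hp
  have hroot : aeval (aeval (AdjoinRoot.root p) r) q = 0 := by
    rw [← aeval_comp, AdjoinRoot.aeval_eq, AdjoinRoot.mk_eq_zero.mpr h]
  have := (AdjoinRoot.powerBasis hp.ne_zero).finite
  rw [minpoly.Irreducible.eq_minpoly hq hroot,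
    natDegree_C_mul (leadingCoeff_ne_zero.mpr hq.ne_zero),
    ← finrank_quotient_span_eq_natDegree (f := p)]
  exact minpoly.degree_dvd (.of_finite K (aeval (AdjoinRoot.root p) r))

theorem Monic.eq_X_sq_add_C_mul_X_add_C {R : Type*} [CommSemiring R] {p : R[X]} (hp : p.Monic)
    (h : p.natDegree = 2) : p = X ^ 2 + C (p.coeff 1) * X + C (p.coeff 0) := by
  conv_lhs => rw [hp.as_sum, h]
  simp only [Finset.sum_range_succ, Finset.sum_range_zero, pow_zero, pow_one, mul_one, zero_add]
  ring

theorem isRoot_or_eq_of_X_sq_add_dvd_X_pow_six_add {R : Type*} [CommRing R] [IsDomain R]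
    {a b A B : R} (h : X ^ 2 + C a * X + C b ∣ X ^ 6 + C A * X ^ 3 + C B) :
    (X ^ 2 + C A * X + C B).IsRoot (a ^ 3) ∨ A = a ^ 3 - 3 * a * b ∧ B = b ^ 3 := by
  set c₁ := (a ^ 2 - b) * (A - a ^ 3 + 3 * a * b)
  set c₀ := B + A * a * b - a ^ 4 * b + 3 * a ^ 2 * b ^ 2 - b ^ 3
  have hdiv : X ^ 6 + C A * X ^ 3 + C B = (X ^ 2 + C a * X + C b) *
      (X ^ 4 - C a * X ^ 3 + C (a ^ 2 - b) * X ^ 2 + C (A + 2 * a * b - a ^ 3) * X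
        + C (a ^ 4 - 3 * a ^ 2 * b + b ^ 2 - a * A)) + (C c₁ * X + C c₀) := by
    simp only [c₁, c₀, map_sub, map_mul, map_pow, map_add, map_ofNat]
    ring
  have hrem : C c₁ * X + C c₀ = 0 := by
    refine eq_zero_of_dvd_of_degree_lt (p := X ^ 2 + C a * X + C b) ?_ ?_
    · rw [← dvd_add_right (dvd_mul_right _ _), ← hdiv]
      exact h
    · rw [show X ^ 2 + C a * X + C b = C 1 * X ^ 2 + C a * X + C b by simp,
        degree_quadratic one_ne_zero]
      exact degree_linear_lt
  have h₁ : c₁ = 0 := by simpa using congrArg (coeff · 1) hrem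
  have h₀ : c₀ = 0 := by simpa using congrArg (coeff · 0) hrem
  rcases mul_eq_zero.mp h₁ with hb | hA
  · left
    simp only [IsRoot, eval_add, eval_mul, eval_pow, eval_X, eval_C]
    linear_combination h₀ + (A * a + a ^ 4 + 2 * a ^ 2 * b - b ^ 2) * hb
  · exact .inr ⟨by linear_combination hA, by linear_combination h₀ - a * b * hA⟩

theorem X_pow_six_add_eq_mul {R : Type*} [CommRing R] (m n : R) :
    X ^ 6 + C (m ^ 3 - 3 * m * n) * X ^ 3 + C (n ^ 3) = (X ^ 2 + C m * X + C n) *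
      (X ^ 4 - C m * X ^ 3 + C (m ^ 2 - n) * X ^ 2 - C (m * n) * X + C (n ^ 2)) := by
  simp only [map_sub, map_mul, map_pow, map_ofNat]
  ring

theorem not_irreducible_X_pow_six_add_iff {A B : K}
    (hg : Irreducible (X ^ 2 + C A * X + C B)) :
    ¬Irreducible (X ^ 6 + C A * X ^ 3 + C B) ↔
      ∃ a b : K, A = a ^ 3 - 3 * a * b ∧ B = b ^ 3 := by
  constructor
  · intro hf
    have hg_deg : (X ^ 2 + C A * X + C B).natDegree = 2 := by compute_degree!
    have hf_deg : (X ^ 6 + C A * X ^ 3 + C B).natDegree = 6 := by compute_degree!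
    have hf_comp : X ^ 6 + C A * X ^ 3 + C B = (X ^ 2 + C A * X + C B).comp (X ^ 3) := by
      simp only [add_comp, mul_comp, pow_comp, X_comp, C_comp]
      ring
    obtain ⟨p, hp_monic, hp_irr, hpf, hp_le⟩ :=
      exists_monic_irreducible_factor_natDegree_le_half (by rintro h; simp [h] at hf_deg)
        (not_isUnit_of_natDegree_pos _ (by omega)) hf
    have hg_dvd : 2 ∣ p.natDegree :=
      hg_deg ▸ natDegree_dvd_natDegree_of_dvd_comp hp_irr hg (hf_comp ▸ hpf)
    have hp_pos := hp_irr.natDegree_pos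
    rw [hp_monic.eq_X_sq_add_C_mul_X_add_C (by omega)] at hpf
    rcases isRoot_or_eq_of_X_sq_add_dvd_X_pow_six_add hpf with hroot | hAB
    · have := degree_eq_one_of_irreducible_of_root hg hroot
      rw [degree_eq_natDegree hg.ne_zero, hg_deg] at this
      exact absurd this (by decide)
    · exact ⟨_, _, hAB⟩
  · rintro ⟨a, b, rfl, rfl⟩ hf
    rw [X_pow_six_add_eq_mul] at hf
    have h₂ : (X ^ 2 + C a * X + C b).natDegree = 2 := by compute_degree!
    have h₄ : (X ^ 4 - C a * X ^ 3 + C (a ^ 2 - b) * X ^ 2 - C (a * b) * X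
        + C (b ^ 2)).natDegree = 4 := by compute_degree!
    rcases hf.isUnit_or_isUnit rfl with h | h
    · exact not_isUnit_of_natDegree_pos _ (by omega) h
    · exact not_isUnit_of_natDegree_pos _ (by omega) h

end Polynomial

theorem IsIntegrallyClosed.exists_algebraMap_eq_of_cube_eq {R K : Type*} [CommRing R] [IsDomain R]
    [IsIntegrallyClosed R] [Field K] [Algebra R K] [IsFractionRing R K] {x : K} {c d : R}
    (h : x ^ 3 = algebraMap R K c * x + algebraMap R K d) : ∃ y : R, algebraMap R K y = x :=
  IsIntegrallyClosed.isIntegral_iff.mp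
    ⟨X ^ 3 - (C c * X + C d), monic_X_pow_sub (degree_linear_le.trans_lt (by norm_num)), by
      simp [h]⟩

theorem stmt2 (A B : ℤ)
    (hg : Irreducible (X ^ 2 + C (A : ℚ) * X + C (B : ℚ))) :
    ¬ Irreducible (X ^ 6 + C (A : ℚ) * X ^ 3 + C (B : ℚ)) ↔
      ∃ m n : ℤ, B = n ^ 3 ∧ A = m ^ 3 - 3 * m * n := by
  rw [not_irreducible_X_pow_six_add_iff hg]
  constructor
  · rintro ⟨a, b, hA, hB⟩
    obtain ⟨n, rfl⟩ := IsIntegrallyClosed.exists_algebraMap_eq_of_cube_eq (R := ℤ) (x := b)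
      (c := 0) (d := B) (by simp [hB])
    obtain ⟨m, rfl⟩ := IsIntegrallyClosed.exists_algebraMap_eq_of_cube_eq (R := ℤ) (x := a)
      (c := 3 * n) (d := A)
      (by simp only [algebraMap_int_eq, eq_intCast, Int.cast_mul, Int.cast_ofNat, hA]; ring)
    simp only [algebraMap_int_eq, eq_intCast] at hA hB
    exact ⟨m, n, by exact_mod_cast hB, by exact_mod_cast hA⟩
  · rintro ⟨m, n, rfl, rfl⟩
    exact ⟨m, n, by push_cast; ring, by push_cast; ring⟩
end

section
/- If g(x) = x^2 + Ax + B ∈ ℤ[x] is irreducible over ℚ and B is squarefree with |B| ≥ 2, then f(x) = x^6 + A x^3 + B is irreducible over ℚ. -/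
/-!
Since `f = g ∘ X ^ 3`, Capelli's lemma (`Polynomial.irreducible_comp`) reduces irreducibility of `f`
to that of `X ^ 3 - θ` over `ℚ(θ)` for a root `θ` of `g`, and for the prime exponent `3` this means
that `θ` is not a cube in `ℚ(θ)`. A cube root `β` of `θ` would be an algebraic integer whose norm
`N(β) ∈ ℤ` satisfies `N(β) ^ 3 = N(θ) = B`, which is impossible for a squarefree non-unit `B`.
-/

open Polynomial IntermediateField

theorem isIntegral_of_minpoly_eq_map {R F E : Type*} [CommRing R] [Field F] [Algebra R F]
    [Ring E] [Algebra F E] [Algebra R E] [IsScalarTower R F E] {p : R[X]} (hp : p.Monic)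
    {x : E} (hx : minpoly F x = p.map (algebraMap R F)) : IsIntegral R x :=
  ⟨p, hp, by rw [← aeval_def, ← aeval_map_algebraMap F, ← hx, minpoly.aeval]⟩

theorem IntermediateField.AdjoinSimple.norm_gen_eq_coeff_zero_minpoly {F E : Type*} [Field F]
    [Field E] [Algebra F E] {x : E} (hx : IsIntegral F x) :
    Algebra.norm F (AdjoinSimple.gen F x) =
      (-1) ^ (minpoly F x).natDegree * (minpoly F x).coeff 0 := by
  simpa [minpoly_gen] using Algebra.PowerBasis.norm_gen_eq_coeff_zero_minpoly (adjoin.powerBasis hx)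

section

variable {R F L : Type*} [CommRing R] [IsIntegrallyClosed R] [Field F]
  [Algebra R F] [IsFractionRing R F]

theorem pow_ne_of_norm_eq_squarefree [Field L] [Algebra F L] [Algebra R L]
    [IsScalarTower R F L] {x : L} (hx : IsIntegral R x) {r : R} (hr : Squarefree r)
    (hu : ¬IsUnit r) (hnorm : Algebra.norm F x = algebraMap R F r) {n : ℕ} (hn : 2 ≤ n) (b : L) :
    b ^ n ≠ x := by
  rintro rfl
  obtain ⟨m, hm⟩ := IsIntegrallyClosed.isIntegral_iff.mp
    (Algebra.isIntegral_norm F (hx.of_pow (by omega)))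
  obtain rfl : m ^ n = r := IsFractionRing.injective R F (by rw [map_pow, hm, ← map_pow, hnorm])
  refine hu (IsUnit.pow n (not_not.mp fun hm_unit => ?_))
  rcases hr.eq_zero_or_one_of_pow_of_not_isUnit hm_unit with h | h <;> omega

theorem IntermediateField.AdjoinSimple.irreducible_X_pow_sub_C_gen [Field L] [Algebra F L]
    [Algebra R L] [IsScalarTower R F L] {p : R[X]} (hp : p.Monic) {x : L}
    (hx : minpoly F x = p.map (algebraMap R F)) (hsq : Squarefree (p.coeff 0))
    (hu : ¬IsUnit (p.coeff 0)) {n : ℕ} (hn : n.Prime) :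
    Irreducible (X ^ n - C (AdjoinSimple.gen F x)) := by
  have hgen_int : IsIntegral R (AdjoinSimple.gen F x) :=
    isIntegral_of_minpoly_eq_map hp (by rw [minpoly_gen, hx])
  have hnorm : Algebra.norm F (AdjoinSimple.gen F x) =
      algebraMap R F ((-1) ^ p.natDegree * p.coeff 0) := by
    rw [norm_gen_eq_coeff_zero_minpoly (isIntegral_of_minpoly_eq_map hp hx).tower_top, hx]
    simp [hp.natDegree_map]
  have hassoc : Associated ((-1) ^ p.natDegree * p.coeff 0) (p.coeff 0) :=
    (associated_isUnit_mul_left_iff (isUnit_neg_one.pow _)).mpr (Associated.refl _)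
  exact X_pow_sub_C_irreducible_of_prime hn <| pow_ne_of_norm_eq_squarefree hgen_int
    (hassoc.squarefree_iff.mpr hsq) (hassoc.isUnit_iff.not.mpr hu) hnorm hn.two_le

end

theorem stmt3 (A B : ℤ)
    (hg : Irreducible (X ^ 2 + C (A : ℚ) * X + C (B : ℚ)))
    (hB : Squarefree B) (hB2 : 2 ≤ |B|) :
    Irreducible (X ^ 6 + C (A : ℚ) * X ^ 3 + C (B : ℚ)) := by
  have hcomp : X ^ 6 + C (A : ℚ) * X ^ 3 + C (B : ℚ) =
      (X ^ 2 + C (A : ℚ) * X + C (B : ℚ)).comp (X ^ 3) := by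
    simp only [add_comp, mul_comp, pow_comp, X_comp, C_comp]; ring
  rw [hcomp]
  refine irreducible_comp (by monicity!) (monic_X_pow 3) hg fun E _ _ x hx => ?_
  rw [Polynomial.map_pow, map_X]
  exact AdjoinSimple.irreducible_X_pow_sub_C_gen (R := ℤ) (p := X ^ 2 + C A * X + C B)
    (by monicity!) (by rw [hx]; simp) (by simpa using hB) (by simp [Int.isUnit_iff_abs_eq]; omega)
    Nat.prime_three
end

section
/- If A is an integer with A ≢ 0 (mod 9), A ≠ 1, A ≠ -1, and both A - 2 and A + 2 are squarefree, then the trinomial x^6 + A x^3 + 1 is irreducible over ℚ. -/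
/-!
If `α` is a root of `x^6 + A x^3 + 1` in a finite extension `K` of `ℚ`, then `α^3` is a root
of `x^2 + A x + 1` and `α + α⁻¹` is a root of `x^3 - 3x + A`. Both are irreducible over `ℚ`:
an integer root `z` of the cubic gives `A ∓ 2 = -(z ∓ 1)^2 (z ± 2)`, so squarefreeness forces
`z = 0` and `A = 0`. Hence `6 ∣ [K : ℚ]`; taking `K = ℚ[x]/(g)` for an irreducible factor `g`
shows that `g` has degree 6.
-/

open Polynomial

universe u

theorem Polynomial.Irreducible.natDegree_dvd_finrank_of_aeval_eq_zero {F K : Type*} [Field F]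
    [Field K] [Algebra F K] [FiniteDimensional F K] {p : F[X]} (hp : Irreducible p) {x : K}
    (hx : aeval x p = 0) : p.natDegree ∣ Module.finrank F K := by
  rw [minpoly.Irreducible.eq_minpoly hp hx,
    natDegree_C_mul (leadingCoeff_ne_zero.mpr hp.ne_zero)]
  exact minpoly.degree_dvd (IsIntegral.of_finite F x)

theorem Polynomial.irreducible_of_natDegree_dvd_finrank {F : Type u} [Field F] {f : F[X]}
    (hf : 0 < f.natDegree)
    (h : ∀ (K : Type u) [Field K] [Algebra F K] [FiniteDimensional F K] (α : K),
      aeval α f = 0 → f.natDegree ∣ Module.finrank F K) :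
    Irreducible f := by
  obtain ⟨g, hg, hgf⟩ := exists_irreducible_of_natDegree_pos hf
  have := Fact.mk hg
  have := (AdjoinRoot.powerBasis hg.ne_zero).finite
  have hfinrank : Module.finrank F (AdjoinRoot g) = g.natDegree :=
    finrank_quotient_span_eq_natDegree
  have hroot : aeval (AdjoinRoot.root g) f = 0 := by
    rwa [AdjoinRoot.aeval_eq, AdjoinRoot.mk_eq_zero]
  have hdvd := hfinrank ▸ h (AdjoinRoot g) _ hroot
  exact (associated_of_dvd_of_natDegree_le hgf (ne_zero_of_natDegree_gt hf)
    (Nat.le_of_dvd hg.natDegree_pos hdvd)).irreducible hg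

theorem Rat.exists_int_eq_of_monic_of_aeval_eq_zero {p : ℤ[X]} (hp : p.Monic) {r : ℚ}
    (hr : aeval r p = 0) : ∃ z : ℤ, r = z ∧ z ∣ p.coeff 0 := by
  simpa using exists_integer_of_is_root_of_monic hp hr

theorem Int.eq_zero_of_squarefree_of_eq_three_mul_sub_pow_three {A z : ℤ}
    (hA : A = 3 * z - z ^ 3) (hm : Squarefree (A - 2)) (hp : Squarefree (A + 2)) : z = 0 := by
  have h₁ : IsUnit (z - 1) := hm (z - 1) ⟨-(z + 2), by rw [hA]; ring⟩
  have h₂ : IsUnit (z + 1) := hp (z + 1) ⟨-(z - 2), by rw [hA]; ring⟩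
  rw [Int.isUnit_iff] at h₁ h₂
  omega

theorem irreducible_X_sq_add_C_mul_X_add_one {A : ℤ} (h₁ : A ≠ 2) (h₂ : A ≠ -2) :
    Irreducible (X ^ 2 + C (A : ℚ) * X + 1) := by
  have hdeg : (X ^ 2 + C (A : ℚ) * X + 1).natDegree = 2 := by compute_degree!
  refine irreducible_of_degree_le_three_of_not_isRoot (by rw [hdeg]; decide) fun r hr => ?_
  have hr : r ^ 2 + A * r + 1 = 0 := by simpa using hr
  obtain ⟨z, rfl, hz⟩ := Rat.exists_int_eq_of_monic_of_aeval_eq_zero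
    (p := X ^ 2 + C A * X + 1) (by monicity!) (by simpa using hr)
  have hz : IsUnit z := isUnit_of_dvd_one (by simpa using hz)
  have hr : z ^ 2 + A * z + 1 = 0 := by exact_mod_cast hr
  rcases Int.isUnit_iff.mp hz with rfl | rfl <;> omega

theorem irreducible_X_pow_three_sub_three_mul_X_add_C {A : ℤ} (hA : A ≠ 0)
    (hm : Squarefree (A - 2)) (hp : Squarefree (A + 2)) :
    Irreducible (X ^ 3 - 3 * X + C (A : ℚ)) := by
  have hdeg : (X ^ 3 - 3 * X + C (A : ℚ)).natDegree = 3 := by compute_degree!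
  refine irreducible_of_degree_le_three_of_not_isRoot (by rw [hdeg]; decide) fun r hr => ?_
  have hr : r ^ 3 - 3 * r + A = 0 := by simpa using hr
  obtain ⟨z, rfl, -⟩ := Rat.exists_int_eq_of_monic_of_aeval_eq_zero
    (p := X ^ 3 - 3 * X + C A) (by monicity!) (by simpa [map_ofNat] using hr)
  have hr : z ^ 3 - 3 * z + A = 0 := by exact_mod_cast hr
  replace hr : A = 3 * z - z ^ 3 := by linear_combination hr
  exact hA (by simp [hr, Int.eq_zero_of_squarefree_of_eq_three_mul_sub_pow_three hr hm hp])

theorem add_inv_pow_three_sub_three_mul_add_inv_add_eq_zero {K : Type*} [Field K] {a α : K}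
    (h : α ^ 6 + a * α ^ 3 + 1 = 0) : (α + α⁻¹) ^ 3 - 3 * (α + α⁻¹) + a = 0 := by
  have hα : α ≠ 0 := by rintro rfl; simp at h
  field_simp
  linear_combination h

theorem stmt6_general (A : ℤ) (h9 : ¬ (9 ∣ A))
    (hm : Squarefree (A - 2)) (hp : Squarefree (A + 2)) :
    Irreducible (X ^ 6 + C (A : ℚ) * X ^ 3 + 1) := by
  have hA : A ≠ 0 := by rintro rfl; exact h9 (dvd_zero 9)
  have hq := irreducible_X_sq_add_C_mul_X_add_one (A := A)
    (fun h => hm.ne_zero (by simp [h])) (fun h => hp.ne_zero (by simp [h]))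
  have hc := irreducible_X_pow_three_sub_three_mul_X_add_C hA hm hp
  have hq2 : (X ^ 2 + C (A : ℚ) * X + 1).natDegree = 2 := by compute_degree!
  have hc3 : (X ^ 3 - 3 * X + C (A : ℚ)).natDegree = 3 := by compute_degree!
  have hf6 : (X ^ 6 + C (A : ℚ) * X ^ 3 + 1).natDegree = 6 := by compute_degree!
  refine irreducible_of_natDegree_dvd_finrank (by omega) fun K _ _ _ α hα => ?_
  have hα : α ^ 6 + A * α ^ 3 + 1 = 0 := by simpa using hα
  have h2 := hq2 ▸ hq.natDegree_dvd_finrank_of_aeval_eq_zero (x := α ^ 3)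
    (by
      simp only [map_add, map_mul, map_pow, map_one, map_intCast, aeval_X]
      linear_combination hα)
  have h3 := hc3 ▸ hc.natDegree_dvd_finrank_of_aeval_eq_zero (x := α + α⁻¹)
    (by simpa [map_ofNat] using add_inv_pow_three_sub_three_mul_add_inv_add_eq_zero hα)
  rw [hf6, show 6 = 2 * 3 from rfl]
  exact Nat.Coprime.mul_dvd_of_dvd_of_dvd (by norm_num) h2 h3

theorem stmt6 (A : ℤ) (h9 : ¬ (9 ∣ A)) (h1 : A ≠ 1) (h1' : A ≠ -1)
    (hm : Squarefree (A - 2)) (hp : Squarefree (A + 2)) :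
    Irreducible (X ^ 6 + C (A : ℚ) * X ^ 3 + 1) :=
  stmt6_general A h9 hm hp
end

section
/- If A is an odd integer with A ≠ ±1 and (A^2 + 3)/4 is a squarefree integer, then f(x) = x^6 + A x^3 + (A^2+3)/4 is irreducible over ℚ. -/
open Polynomial IntermediateField

lemma no_rat_cube (A B : ℤ) (hB : 4 * B = A ^ 2 + 3)
    (h1 : A ≠ 1) (h1' : A ≠ -1) (hsf : Squarefree B) (r : ℚ) (hr : r ^ 3 = (B : ℚ)) : False := by
  have hint : IsIntegral ℤ r := by
    refine ⟨X ^ 3 - C B, monic_X_pow_sub_C _ (by norm_num), ?_⟩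
    simp only [eval₂_sub, eval₂_pow, eval₂_X, eval₂_C, hr]
    simp
  obtain ⟨n, hn⟩ := IsIntegrallyClosed.isIntegral_iff.mp hint
  have hn' : (n : ℚ) = r := by exact_mod_cast hn
  have hnB : n ^ 3 = B := by
    have : ((n : ℚ)) ^ 3 = (B : ℚ) := by rw [hn']; exact hr
    exact_mod_cast this
  have hu : IsUnit n := hsf n (by rw [← hnB]; exact ⟨n, by ring⟩)
  rcases Int.isUnit_iff.mp hu with h | h
  · subst h
    have hA2 : A ^ 2 = 1 := by omega
    rcases mul_eq_zero.mp (show (A - 1) * (A + 1) = 0 by nlinarith) with h | h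
    · exact h1 (by omega)
    · exact h1' (by omega)
  · subst h
    have : A ^ 2 = -7 := by omega
    nlinarith [sq_nonneg A]

lemma quad_natDegree (A B : ℤ) : (X ^ 2 + C (A : ℚ) * X + C (B : ℚ)).natDegree = 2 := by
  rw [show (X ^ 2 + C (A : ℚ) * X + C (B : ℚ)) = C 1 * X ^ 2 + C (A : ℚ) * X + C (B : ℚ) by
    simp]
  exact natDegree_quadratic one_ne_zero

lemma quad_irred (A B : ℤ) (hB : 4 * B = A ^ 2 + 3) :
    Irreducible (X ^ 2 + C (A : ℚ) * X + C (B : ℚ)) := by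
  have hdeg := quad_natDegree A B
  rw [irreducible_iff_roots_eq_zero_of_degree_le_three (by omega) (by omega)]
  rw [Multiset.eq_zero_iff_forall_notMem]
  intro r hr
  have h0 : (X ^ 2 + C (A : ℚ) * X + C (B : ℚ)) ≠ 0 := by
    intro h; rw [h] at hdeg; simp at hdeg
  rw [mem_roots h0] at hr
  simp only [IsRoot, eval_add, eval_mul, eval_pow, eval_X, eval_C] at hr
  have hBQ : (4 : ℚ) * B = (A : ℚ) ^ 2 + 3 := by exact_mod_cast hB
  nlinarith [sq_nonneg (2 * r + (A : ℚ))]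

lemma quad_monic (a b : ℚ) : (X ^ 2 + C a * X + C b).Monic := by
  rw [add_assoc]
  apply monic_X_pow_add
  exact lt_of_le_of_lt degree_linear_le (by norm_num)

lemma norm_gen_eq (A B : ℤ) (E : Type) [Field E] [Algebra ℚ E] (x : E)
    (hx : minpoly ℚ x = X ^ 2 + C (A : ℚ) * X + C (B : ℚ)) (hxi : IsIntegral ℚ x) :
    Algebra.norm ℚ (AdjoinSimple.gen ℚ x) = (B : ℚ) := by
  have h := @Algebra.PowerBasis.norm_gen_eq_coeff_zero_minpoly ℚ ℚ⟮x⟯ _ _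
    (IntermediateField.algebra' _) (adjoin.powerBasis hxi)
  rw [adjoin.powerBasis_gen, adjoin.powerBasis_dim, minpoly_gen, hx] at h
  have hc : (X ^ 2 + C (A : ℚ) * X + C (B : ℚ)).coeff 0 = (B : ℚ) := by
    simp [coeff_X_pow]
  rw [quad_natDegree A B, hc] at h
  norm_num at h
  convert h using 2
  congr!
  exact Subsingleton.elim _ _

theorem stmt7 (A B : ℤ) (hA : Odd A) (hB : 4 * B = A ^ 2 + 3)
    (h1 : A ≠ 1) (h1' : A ≠ -1) (hsf : Squarefree B) :
    Irreducible (X ^ 6 + C (A : ℚ) * X ^ 3 + C (B : ℚ)) := by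
  have hcomp : (X ^ 2 + C (A : ℚ) * X + C (B : ℚ)).comp (X ^ 3)
      = X ^ 6 + C (A : ℚ) * X ^ 3 + C (B : ℚ) := by
    simp [pow_mul]
    ring
  rw [← hcomp]
  have hq := quad_irred A B hB
  refine Polynomial.irreducible_comp (quad_monic _ _) (monic_X_pow 3) hq ?_
  intro E _ _ x hx
  have hxi : IsIntegral ℚ x := by
    rw [← minpoly.ne_zero_iff, hx]
    exact (quad_monic (A : ℚ) (B : ℚ)).ne_zero
  simp only [Polynomial.map_pow, Polynomial.map_X]
  apply X_pow_sub_C_irreducible_of_prime Nat.prime_three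
  intro b hb
  apply no_rat_cube A B hB h1 h1' hsf (Algebra.norm ℚ b)
  rw [← norm_gen_eq A B E x hx hxi, ← map_pow, hb]
end

section
/- If A is an odd integer and (A^2 + 3)/4 = n^3 has an integer solution n with (A^2+3)/4 squarefree, then A = 1 or A = -1 (and n = 1). -/
theorem stmt8 (A B n : ℤ) (hA : Odd A) (hB : 4 * B = A ^ 2 + 3)
    (hsf : Squarefree B) (hn : B = n ^ 3) :
    (A = 1 ∨ A = -1) ∧ n = 1 := by
  have hu : IsUnit n := hsf n ⟨n, by rw [hn]; ring⟩
  rcases Int.isUnit_iff.mp hu with h1 | h1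
  · subst h1
    have hB1 : B = 1 := by simpa using hn
    subst hB1
    have h : (A - 1) * (A + 1) = 0 := by nlinarith
    rcases mul_eq_zero.mp h with h | h
    · exact ⟨Or.inl (by linarith), rfl⟩
    · exact ⟨Or.inr (by linarith), rfl⟩
  · subst h1
    have hB1 : B = -1 := by simpa using hn
    subst hB1
    nlinarith [sq_nonneg A]
end

section
/- Suppose R(x) = x^3 - 3Bx + AB factors over ℤ as (x - r)(x^2 + rx + r^2 - 3B) with r ∈ ℤ, B squarefree and B ≠ 0. Then B divides r, and A^2 - 4B = (r^2 - 4B)·(r^2/B - 1)^2. -/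
open Polynomial

theorem stmt13 (A B r : ℤ) (hsf : Squarefree B) (hB : B ≠ 0)
    (hfac : (X ^ 3 - C (3 * B) * X + C (A * B) : ℤ[X]) =
      (X - C r) * (X ^ 2 + C r * X + C (r ^ 2 - 3 * B))) :
    B ∣ r ∧ A ^ 2 - 4 * B = (r ^ 2 - 4 * B) * (r ^ 2 / B - 1) ^ 2 := by
  have hroot : r ^ 3 - 3 * B * r + A * B = 0 := by
    have := congrArg (eval r) hfac
    simpa using this
  have hdvd3 : B ∣ r ^ 3 := ⟨3 * r - A, by linarith⟩
  have hdvd : B ∣ r := (hsf.dvd_pow_iff_dvd (by norm_num)).mp hdvd3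
  obtain ⟨t, ht⟩ := hdvd
  refine ⟨⟨t, ht⟩, ?_⟩
  have hA : A = 3 * B * t - B ^ 2 * t ^ 3 := by
    have h : B * A = B * (3 * B * t - B ^ 2 * t ^ 3) := by subst ht; ring_nf; linarith
    exact mul_left_cancel₀ hB h
  have hdiv : r ^ 2 / B = B * t ^ 2 := by
    subst ht
    rw [mul_pow, pow_two B, mul_assoc, Int.mul_ediv_cancel_left _ hB]
  rw [hdiv, hA, ht]; ring
end
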